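/- Suppose 1/C ≪ ε′ ≪ ε₁ ≪ 1 and let D be a digraph on n ≥ Ck vertices with δ⁰(D) ≥ n/2 + k. Suppose U_1, U_2 ⊆ V(D) witness the extremal condition EC with parameter ε′ (|U_i| ≥ (1/2 − ε′)n and at most (ε′n)² arcs from U_1 to U_2), and suppose ε₁n < |U_1 ∩ U_2| < (1/2 − ε₁)n. Set U_0 = U_1 ∩ U_2, W_1 = U_1 ∖ U_0, W_2 = V(D) ∖ (U_1 ∪ U_2), W_3 = U_2 ∖ U_0, and W_4 = U_0. Then: (i) for each j ∈ {1, 3}, (1/2 − ε′/2)n + k ≤ |W_j| + |W_2| ≤ (1/2 + ε′)n; (ii) −3ε′n/2 + k ≤ |W_1| − |W_3| ≤ 3ε′n/2 − k; and (iii) −ε′n + 2k ≤ |W_2| − |W_4| ≤ 2ε′n. -/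

import Mathlib

open scoped Classical

/-- The out-degree of a vertex `v` in the digraph with arc relation `A`. -/
noncomputable def outDeg {V : Type*} (A : V → V → Prop) (v : V) : ℕ :=
  {u | A v u}.ncard

/-- The in-degree of a vertex `v` in the digraph with arc relation `A`. -/
noncomputable def inDeg {V : Type*} (A : V → V → Prop) (v : V) : ℕ :=
  {u | A u v}.ncard

/-- The number of arcs directed from `S` to `T`. -/
noncomputable def arcsCount {V : Type*} (A : V → V → Prop) (S T : Set V) : ℕ :=
  {p : V × V | p.1 ∈ S ∧ p.2 ∈ T ∧ A p.1 p.2}.ncard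

/-!
A vertex of `U₁` with fewest out-neighbours in `U₂` has at most `(ε'n)² / |U₁| ≤ ε'n/2` of them
(this is where `ε' ≤ 1/6` enters), so its out-degree `≥ n/2 + k` forces `|U₂ᶜ| ≥ (1/2 - ε'/2)n + k`.
Dually, a vertex of `U₂` with fewest in-neighbours in `U₁` bounds `|U₁|`. Hence both `|Uᵢ|` lie in
`[(1/2 - ε')n, (1/2 + ε'/2)n - k]`, and all claims are linear consequences of
`|W₁| + |W₂| = n - |U₂|`, `|W₃| + |W₂| = n - |U₁|`, `|W₁| - |W₃| = |U₁| - |U₂|` and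
`|W₂| - |W₄| = n - |U₁| - |U₂|`.
-/

section

variable {V : Type*}

lemma arcsCount_eq_sum [Fintype V] (A : V → V → Prop) (S T : Set V) :
    arcsCount A S T = ∑ v ∈ S.toFinset, {u | u ∈ T ∧ A v u}.ncard := by
  simp only [arcsCount, Set.ncard_eq_toFinset_card']
  rw [Finset.card_eq_sum_card_fiberwise (f := Prod.fst) (t := S.toFinset)
    fun p hp => by simp_all]
  refine Finset.sum_congr rfl fun v hv => ?_
  rw [Set.mem_toFinset] at hv
  refine Finset.card_nbij' Prod.snd (Prod.mk v) ?_ ?_ ?_ ?_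
  · rintro ⟨x, y⟩ h
    obtain ⟨⟨-, hy, hxy⟩, rfl⟩ : (x ∈ S ∧ y ∈ T ∧ A x y) ∧ x = v := by simpa using h
    simpa using ⟨hy, hxy⟩
  · intro u hu
    simp_all
  · rintro ⟨x, y⟩ h
    simp_all
  · intro u hu
    rfl

lemma arcsCount_flip (A : V → V → Prop) (S T : Set V) :
    arcsCount (flip A) T S = arcsCount A S T := by
  rw [arcsCount, arcsCount, ← Set.ncard_image_of_injective _ Prod.swap_injective,
    Set.image_swap_eq_preimage_swap]
  congr 1
  ext ⟨x, y⟩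
  exact and_left_comm

lemma exists_mem_ncard_mul_le_arcsCount [Fintype V] (A : V → V → Prop)
    {S : Set V} (hS : S.Nonempty) (T : Set V) :
    ∃ v ∈ S, S.ncard * {u | u ∈ T ∧ A v u}.ncard ≤ arcsCount A S T := by
  obtain ⟨v, hv, hmin⟩ := S.toFinset.exists_min_image
    (fun v => {u | u ∈ T ∧ A v u}.ncard) (by simpa using hS)
  refine ⟨v, by simpa using hv, ?_⟩
  rw [arcsCount_eq_sum, Set.ncard_eq_toFinset_card', ← smul_eq_mul, ← Finset.sum_const]
  exact Finset.sum_le_sum hmin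

lemma outDeg_le_ncard_inter_add_ncard_compl [Finite V] (A : V → V → Prop) (v : V)
    (T : Set V) : outDeg A v ≤ {u | u ∈ T ∧ A v u}.ncard + Tᶜ.ncard := by
  refine (Set.ncard_le_ncard ?_).trans (Set.ncard_union_le _ _)
  intro u hu
  by_cases huT : u ∈ T
  exacts [Or.inl ⟨huT, hu⟩, Or.inr huT]

lemma le_half_mul_of_mul_le_sq {ε n s d : ℝ} (hε : 0 ≤ ε) (hε' : ε ≤ 1/6) (hn : 0 ≤ n)
    (hs : 0 < s) (hsn : (1/2 - ε) * n ≤ s) (hsd : s * d ≤ (ε * n) ^ 2) :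
    d ≤ ε / 2 * n := by
  by_contra! hd
  have := mul_le_mul_of_nonneg_right hsn (by positivity : 0 ≤ ε / 2 * n)
  nlinarith [mul_lt_mul_of_pos_left hd hs,
    mul_nonneg (mul_nonneg hε (sub_nonneg.2 hε')) (mul_nonneg hn hn)]

lemma ncard_le_of_arcsCount_le_sq [Fintype V] (A : V → V → Prop) {k : ℕ} {ε : ℝ}
    (hε : 0 ≤ ε) (hε' : ε ≤ 1/6)
    (hdeg : ∀ v, (Fintype.card V : ℝ) / 2 + k ≤ outDeg A v) {S : Set V} (hS : S.Nonempty)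
    (hSc : (1/2 - ε) * Fintype.card V ≤ S.ncard) (T : Set V)
    (harcs : (arcsCount A S T : ℝ) ≤ (ε * Fintype.card V) ^ 2) :
    (T.ncard : ℝ) ≤ (1/2 + ε/2) * Fintype.card V - k := by
  obtain ⟨v, -, hv⟩ := exists_mem_ncard_mul_le_arcsCount A hS T
  have hsmall : ({u | u ∈ T ∧ A v u}.ncard : ℝ) ≤ ε / 2 * Fintype.card V :=
    le_half_mul_of_mul_le_sq hε hε' (Nat.cast_nonneg _) (Nat.cast_pos.mpr hS.ncard_pos) hSc
      (le_trans (by exact_mod_cast hv) harcs)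
  have hcompl : (Tᶜ.ncard : ℝ) = Fintype.card V - T.ncard := by
    rw [eq_sub_iff_add_eq, ← Nat.cast_add, Set.ncard_compl_add_ncard, Nat.card_eq_fintype_card]
  have hout : (outDeg A v : ℝ) ≤ {u | u ∈ T ∧ A v u}.ncard + Tᶜ.ncard := by
    exact_mod_cast outDeg_le_ncard_inter_add_ncard_compl A v T
  linarith [hdeg v]

end

/-- **Claims on the sizes of the `Wᵢ` (Case 3 of Lemma 3.12).**  Suppose
`1/C ≪ ε' ≪ ε₁ ≪ 1`, let `D` be a digraph on `n ≥ Ck` vertices with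
`δ⁰(D) ≥ n/2 + k`, let `U₁, U₂` witness **EC** with parameter `ε'`, and suppose
`ε₁n < |U₁ ∩ U₂| < (1/2 - ε₁)n`.  With `U₀ = U₁ ∩ U₂`, `W₁ = U₁ ∖ U₀`,
`W₂ = V(D) ∖ (U₁ ∪ U₂)`, `W₃ = U₂ ∖ U₀`, `W₄ = U₀` we have:
(i) `(1/2 - ε'/2)n + k ≤ |W_j| + |W₂| ≤ (1/2 + ε')n` for `j ∈ {1,3}`;
(ii) `-3ε'n/2 + k ≤ |W₁| - |W₃| ≤ 3ε'n/2 - k`;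
(iii) `-ε'n + 2k ≤ |W₂| - |W₄| ≤ 2ε'n`. -/
theorem extremal_partition_size_claims :
    ∃ ε₁₀ : ℝ, 0 < ε₁₀ ∧ ε₁₀ < 1 ∧
      ∀ ε₁ : ℝ, 0 < ε₁ → ε₁ ≤ ε₁₀ →
        ∃ ε'₀ : ℝ, 0 < ε'₀ ∧
          ∀ ε' : ℝ, 0 < ε' → ε' ≤ ε'₀ →
            ∃ C₀ : ℕ, ∀ C : ℕ, C₀ ≤ C →
              ∀ (k n : ℕ) (V : Type) [Fintype V] (A : V → V → Prop),
                (∀ v, ¬ A v v) →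
                Fintype.card V = n →
                C * k ≤ n →
                (∀ v : V, (n : ℝ) / 2 + k ≤ (outDeg A v : ℝ) ∧
                          (n : ℝ) / 2 + k ≤ (inDeg A v : ℝ)) →
                ∀ U₁ U₂ : Set V,
                  (1/2 - ε') * n ≤ ((U₁.ncard : ℕ) : ℝ) →
                  (1/2 - ε') * n ≤ ((U₂.ncard : ℕ) : ℝ) →
                  (arcsCount A U₁ U₂ : ℝ) ≤ (ε' * n)^2 →
                  ε₁ * n < (((U₁ ∩ U₂).ncard : ℕ) : ℝ) →
                  (((U₁ ∩ U₂).ncard : ℕ) : ℝ) < (1/2 - ε₁) * n →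
                  ∀ W₁ W₂ W₃ W₄ : Set V,
                    W₁ = U₁ \ (U₁ ∩ U₂) →
                    W₂ = (U₁ ∪ U₂)ᶜ →
                    W₃ = U₂ \ (U₁ ∩ U₂) →
                    W₄ = U₁ ∩ U₂ →
                    ((1/2 - ε'/2) * n + k ≤ (W₁.ncard : ℝ) + (W₂.ncard : ℝ) ∧
                      (W₁.ncard : ℝ) + (W₂.ncard : ℝ) ≤ (1/2 + ε') * n ∧
                      (1/2 - ε'/2) * n + k ≤ (W₃.ncard : ℝ) + (W₂.ncard : ℝ) ∧
                      (W₃.ncard : ℝ) + (W₂.ncard : ℝ) ≤ (1/2 + ε') * n) ∧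
                    (-(3 * ε' * n / 2) + k ≤ (W₁.ncard : ℝ) - (W₃.ncard : ℝ) ∧
                      (W₁.ncard : ℝ) - (W₃.ncard : ℝ) ≤ 3 * ε' * n / 2 - k) ∧
                    (-(ε' * n) + 2 * k ≤ (W₂.ncard : ℝ) - (W₄.ncard : ℝ) ∧
                      (W₂.ncard : ℝ) - (W₄.ncard : ℝ) ≤ 2 * ε' * n) := by
  refine ⟨1/2, by norm_num, by norm_num, fun ε₁ hε₁ _ => ⟨1/6, by norm_num, fun ε' hε' hε'le =>
    ⟨0, fun _ _ => ?_⟩⟩⟩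
  rintro k n V _ A - rfl - hdeg U₁ U₂ hU₁ hU₂ harcs hU₀ - W₁ W₂ W₃ W₄ rfl rfl rfl rfl
  have hU₀ne : (U₁ ∩ U₂).Nonempty :=
    (Set.ncard_pos).mp (Nat.cast_pos.mp (hU₀.trans_le' (by positivity)))
  have hU₂le := ncard_le_of_arcsCount_le_sq A hε'.le hε'le (fun v => (hdeg v).1)
    (hU₀ne.mono Set.inter_subset_left) hU₁ U₂ harcs
  -- `inDeg A v` is `outDeg (flip A) v` by definition
  have hU₁le := ncard_le_of_arcsCount_le_sq (flip A) hε'.le hε'le (fun v => (hdeg v).2)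
    (hU₀ne.mono Set.inter_subset_right) hU₂ U₁ (by rwa [arcsCount_flip])
  have hW₁ : ((U₁ \ (U₁ ∩ U₂)).ncard : ℝ) + (U₁ ∩ U₂).ncard = U₁.ncard := by
    exact_mod_cast Set.ncard_sdiff_add_ncard_of_subset Set.inter_subset_left
  have hW₃ : ((U₂ \ (U₁ ∩ U₂)).ncard : ℝ) + (U₁ ∩ U₂).ncard = U₂.ncard := by
    exact_mod_cast Set.ncard_sdiff_add_ncard_of_subset Set.inter_subset_right
  have hW₂ : ((U₁ ∪ U₂)ᶜ.ncard : ℝ) + (U₁ ∪ U₂).ncard = Fintype.card V := by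
    rw [← Nat.card_eq_fintype_card]; exact_mod_cast Set.ncard_compl_add_ncard (U₁ ∪ U₂)
  have hunion : ((U₁ ∪ U₂).ncard : ℝ) + (U₁ ∩ U₂).ncard = U₁.ncard + U₂.ncard := by
    exact_mod_cast Set.ncard_union_add_ncard_inter U₁ U₂
  have hk : (0 : ℝ) ≤ k := Nat.cast_nonneg k
  refine ⟨⟨?_, ?_, ?_, ?_⟩, ⟨?_, ?_⟩, ⟨?_, ?_⟩⟩ <;> linarith
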